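/- arXiv:math/9712247 — 4 statements merged into one kernel-verified Lean document; each statement's English description precedes it below -/
import Mathlib

section
/- Under the assumptions Re[e^{iη}(r p(x) + q(x)/w(x) − K)] ≥ 0 for all x and r > 0, Re[(λ − K)e^{iη}] < 0, and Re[e^{iη} cos α · conj(sin α)] ≤ 0, the quantity Re[e^{iη}(−cos α·conj(sin α) + ∫_a^X {p|φ'|² + (q − λw)|φ|²} dx)] is strictly positive for every X ∈ (a, b), where φ is the solution of −(pφ')' + qφ = λwφ with φ(a) = sin α, pφ'(a) = −cos α. -/
open MeasureTheory

/-- Under `Re[e^{iη}(rp + q/w - K)] ≥ 0`, `Re[(λ-K)e^{iη}] < 0` and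
`Re[e^{iη} cos α conj(sin α)] ≤ 0`, the quantity
`Re[e^{iη}(-cos α conj(sin α) + ∫_a^X (p|φ'|² + (q-λw)|φ|²) dx)]` is strictly positive for
every `X ∈ (a,b)`, where `φ` solves `-(pφ')' + qφ = λwφ`, `φ(a)=sin α`, `pφ'(a)=-cos α`. -/
theorem stmt8 (a b : ℝ) (hab : a < b) (p q φ φ' pφd : ℝ → ℂ) (w : ℝ → ℝ)
    (α K lam : ℂ) (η : ℝ)
    (hw : ∀ x ∈ Set.Ico a b, 0 < w x) (hwmeas : Measurable w)
    (hQ : ∀ x ∈ Set.Ico a b, ∀ r : ℝ, 0 < r →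
      0 ≤ (Complex.exp (Complex.I * η) * ((r : ℂ) * p x + q x / (w x : ℂ) - K)).re)
    (hlam : ((lam - K) * Complex.exp (Complex.I * η)).re < 0)
    (hα : (Complex.exp (Complex.I * η) * Complex.cos α * (starRingEnd ℂ) (Complex.sin α)).re ≤ 0)
    (hφ : ∀ x ∈ Set.Ico a b, HasDerivAt φ (φ' x) x)
    (hpφ : ∀ x ∈ Set.Ico a b, HasDerivAt (fun t => p t * φ' t) (pφd x) x)
    (heq : ∀ x ∈ Set.Ico a b, -(pφd x) + q x * φ x = lam * (w x : ℂ) * φ x)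
    (hφa : φ a = Complex.sin α) (hpφa : p a * φ' a = -Complex.cos α)
    (hint : ∀ X ∈ Set.Ioo a b, IntervalIntegrable (fun x => Complex.exp (Complex.I * η) *
        (p x * (‖φ' x‖ : ℂ) ^ 2 + (q x - lam * (w x : ℂ)) * (‖φ x‖ : ℂ) ^ 2)) volume a X) :
    ∀ X ∈ Set.Ioo a b,
      0 < (Complex.exp (Complex.I * η) * (-(Complex.cos α * (starRingEnd ℂ) (Complex.sin α))
          + ∫ x in a..X, (p x * (‖φ' x‖ : ℂ) ^ 2
              + (q x - lam * (w x : ℂ)) * (‖φ x‖ : ℂ) ^ 2))).re := by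
  intro X hX
  obtain ⟨haX, hXb⟩ := hX
  have hax : a ≤ X := le_of_lt haX
  set E := Complex.exp (Complex.I * (η : ℂ)) with hE
  set G := fun x => p x * (‖φ' x‖ : ℂ) ^ 2 + (q x - lam * (w x : ℂ)) * (‖φ x‖ : ℂ) ^ 2 with hG
  set c := (E * (K - lam)).re with hc_def
  have hc : 0 < c := by
    have : E * (K - lam) = -((lam - K) * E) := by ring
    rw [hc_def, this, Complex.neg_re]
    linarith
  -- A and B nonneg
  have hAB : ∀ x ∈ Set.Ico a b, 0 ≤ (E * p x).re ∧ 0 ≤ (E * (q x / (w x : ℂ) - K)).re := by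
    intro x hx
    set A := (E * p x).re with hA_def
    set B := (E * (q x / (w x : ℂ) - K)).re with hB_def
    have hr : ∀ r : ℝ, 0 < r → 0 ≤ r * A + B := by
      intro r hr
      have h := hQ x hx r hr
      have hexp : E * ((r : ℂ) * p x + q x / (w x : ℂ) - K)
          = (r : ℂ) * (E * p x) + E * (q x / (w x : ℂ) - K) := by ring
      rw [hexp, Complex.add_re, Complex.re_ofReal_mul] at h
      exact h
    have hA : 0 ≤ A := by
      by_contra hA
      push_neg at hA
      have hnA : (0:ℝ) < -A := by linarith
      have hnA0 : (-A) ≠ 0 := ne_of_gt hnA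
      have hrpos : 0 < (|B| + 1) / (-A) := div_pos (by positivity) hnA
      have h := hr _ hrpos
      have heq1 : (|B| + 1) / (-A) * A = -(|B| + 1) := by
        calc (|B| + 1) / (-A) * A = -((|B| + 1) / (-A) * (-A)) := by ring
          _ = -(|B| + 1) := by rw [div_mul_cancel₀ _ hnA0]
      rw [heq1] at h
      have := le_abs_self B
      linarith
    have hB : 0 ≤ B := by
      rcases eq_or_lt_of_le hA with hA0 | hA0
      · have h := hr 1 one_pos
        rw [← hA0] at h
        linarith
      · by_contra hB
        push_neg at hB
        have h2A : (2 * A) ≠ 0 := by positivity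
        have hrpos : 0 < -B / (2 * A) := div_pos (by linarith) (by linarith)
        have h := hr _ hrpos
        have heq1 : -B / (2 * A) * A = -B / 2 := by
          field_simp
        rw [heq1] at h
        linarith
    exact ⟨hA, hB⟩
  -- pointwise lower bound
  have hpt : ∀ x ∈ Set.Ico a b, c * (w x * ‖φ x‖ ^ 2) ≤ (E * G x).re := by
    intro x hx
    obtain ⟨hA, hB⟩ := hAB x hx
    have hwx : 0 < w x := hw x hx
    have hw0 : (w x : ℂ) ≠ 0 := by exact_mod_cast ne_of_gt hwx
    have key : E * G x = ((‖φ' x‖ ^ 2 : ℝ) : ℂ) * (E * p x)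
        + ((w x * ‖φ x‖ ^ 2 : ℝ) : ℂ) * (E * (q x / (w x : ℂ) - K))
        + ((w x * ‖φ x‖ ^ 2 : ℝ) : ℂ) * (E * (K - lam)) := by
      rw [hG]
      push_cast
      field_simp
      ring
    have hre : (E * G x).re = ‖φ' x‖ ^ 2 * (E * p x).re
        + (w x * ‖φ x‖ ^ 2) * (E * (q x / (w x : ℂ) - K)).re
        + (w x * ‖φ x‖ ^ 2) * c := by
      rw [key, Complex.add_re, Complex.add_re, Complex.re_ofReal_mul,
        Complex.re_ofReal_mul, Complex.re_ofReal_mul, ← hc_def]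
    rw [hre]
    have h1 : 0 ≤ ‖φ' x‖ ^ 2 * (E * p x).re := by positivity
    have h2 : 0 ≤ (w x * ‖φ x‖ ^ 2) * (E * (q x / (w x : ℂ) - K)).re := by positivity
    nlinarith
  have hsub : Set.Ioc a X ⊆ Set.Ico a b := fun y hy =>
    ⟨le_of_lt hy.1, lt_of_le_of_lt hy.2 hXb⟩
  have hsub' : Set.Icc a X ⊆ Set.Ico a b := fun y hy =>
    ⟨hy.1, lt_of_le_of_lt hy.2 hXb⟩
  -- φ is not identically zero on [a, X]
  have hne : ∃ x ∈ Set.Icc a X, φ x ≠ 0 := by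
    by_contra h
    push_neg at h
    have hsin : Complex.sin α = 0 := by
      rw [← hφa]; exact h a ⟨le_refl a, hax⟩
    have hφ'0 : ∀ x ∈ Set.Ioo a X, φ' x = 0 := by
      intro x hx
      have h1 : HasDerivAt φ (φ' x) x := hφ x ⟨le_of_lt hx.1, lt_trans hx.2 hXb⟩
      have h2 : HasDerivAt φ 0 x := by
        have hev : (fun _ : ℝ => (0 : ℂ)) =ᶠ[nhds x] φ := by
          filter_upwards [Ioo_mem_nhds hx.1 hx.2] with y hy
          exact (h y ⟨le_of_lt hy.1, le_of_lt hy.2⟩).symm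
        exact (hasDerivAt_const x (0 : ℂ)).congr_of_eventuallyEq hev.symm
      exact h1.unique h2
    have hcont : ContinuousAt (fun t => p t * φ' t) a :=
      (hpφ a ⟨le_refl a, hab⟩).continuousAt
    have hNB : (nhdsWithin a (Set.Ioo a X)).NeBot := by
      rw [← mem_closure_iff_nhdsWithin_neBot, closure_Ioo (ne_of_lt haX)]
      exact ⟨le_refl a, hax⟩
    have hlim : Filter.Tendsto (fun t => p t * φ' t) (nhdsWithin a (Set.Ioo a X))
        (nhds (p a * φ' a)) := hcont.continuousWithinAt.tendsto
    have hlim0 : Filter.Tendsto (fun t => p t * φ' t) (nhdsWithin a (Set.Ioo a X))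
        (nhds 0) := by
      apply Filter.Tendsto.congr' _ tendsto_const_nhds
      filter_upwards [self_mem_nhdsWithin] with y hy
      rw [hφ'0 y hy, mul_zero]
    have h0 : p a * φ' a = 0 := tendsto_nhds_unique hlim hlim0
    have hcos : Complex.cos α = 0 := by
      rw [hpφa] at h0
      simpa using h0
    have := Complex.sin_sq_add_cos_sq α
    rw [hsin, hcos] at this
    norm_num at this
  obtain ⟨x0, hx0, hφx0⟩ := hne
  -- measurability of the comparison function
  have hφcont : ContinuousOn φ (Set.Ioc a X) := fun y hy =>
    ((hφ y (hsub hy)).continuousAt).continuousWithinAt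
  have hφmeas : AEMeasurable φ (volume.restrict (Set.Ioc a X)) :=
    hφcont.aemeasurable measurableSet_Ioc
  set f := fun x => c * (w x * ‖φ x‖ ^ 2) with hf_def
  have hfmeas : AEStronglyMeasurable f (volume.restrict (Set.Ioc a X)) := by
    apply AEMeasurable.aestronglyMeasurable
    exact (aemeasurable_const.mul ((hwmeas.aemeasurable).mul
      ((hφmeas.norm).pow aemeasurable_const)))
  -- integrability of Re (E * G) on Ioc a X
  have hIntC : IntegrableOn (fun x => E * G x) (Set.Ioc a X) volume := by
    have := (hint X ⟨haX, hXb⟩).1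
    rwa [hE, hG]
  have hIntRe : IntegrableOn (fun x => (E * G x).re) (Set.Ioc a X) volume := hIntC.re
  have hfnonneg : ∀ x ∈ Set.Ioc a X, 0 ≤ f x := by
    intro x hx
    have := hw x (hsub hx)
    positivity
  have hIntf : IntegrableOn f (Set.Ioc a X) volume := by
    apply Integrable.mono' hIntRe hfmeas
    rw [ae_restrict_iff' measurableSet_Ioc]
    apply ae_of_all
    intro x hx
    rw [Real.norm_eq_abs, abs_of_nonneg (hfnonneg x hx)]
    exact hpt x (hsub hx)
  -- positivity of ∫ f
  have hfpos : 0 < ∫ x in Set.Ioc a X, f x := by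
    rw [setIntegral_pos_iff_support_of_nonneg_ae _ hIntf]
    · -- find an interval where f ≠ 0
      have hcontx0 : ContinuousAt φ x0 := (hφ x0 (hsub' hx0)).continuousAt
      have := hcontx0.eventually_ne hφx0
      rw [Metric.eventually_nhds_iff] at this
      obtain ⟨ε, hε, hball⟩ := this
      set l := max a (x0 - ε) with hl
      set r := min X (x0 + ε) with hr
      have hlr : l < r := by
        rcases hx0 with ⟨h1, h2⟩
        apply max_lt <;> apply lt_min <;> linarith
      have hsubset : Set.Ioo l r ⊆ Function.support f ∩ Set.Ioc a X := by
        intro y hy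
        have hya : a < y := lt_of_le_of_lt (le_max_left _ _) hy.1
        have hyX : y ≤ X := le_of_lt (lt_of_lt_of_le hy.2 (min_le_left _ _))
        have hdist : dist y x0 < ε := by
          rw [Real.dist_eq, abs_lt]
          constructor
          · have := lt_of_le_of_lt (le_max_right _ _) hy.1; linarith
          · have := lt_of_lt_of_le hy.2 (min_le_right _ _); linarith
        have hφy : φ y ≠ 0 := hball hdist
        have hwy : 0 < w y := hw y (hsub ⟨hya, hyX⟩)
        have hφy' : 0 < ‖φ y‖ := norm_pos_iff.mpr hφy
        constructor
        · rw [Function.mem_support, hf_def]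
          positivity
        · exact ⟨hya, hyX⟩
      calc (0 : ENNReal) < volume (Set.Ioo l r) := by
            rw [Real.volume_Ioo]; simp [hlr]
        _ ≤ volume (Function.support f ∩ Set.Ioc a X) := measure_mono hsubset
    · rw [Filter.EventuallyLE, ae_restrict_iff' measurableSet_Ioc]
      exact ae_of_all _ hfnonneg
  -- comparison of integrals
  have hcmp : (∫ x in Set.Ioc a X, f x) ≤ ∫ x in Set.Ioc a X, (E * G x).re :=
    setIntegral_mono_on hIntf hIntRe measurableSet_Ioc (fun x hx => hpt x (hsub hx))
  -- rewrite the goal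
  have h1 : E * (-(Complex.cos α * (starRingEnd ℂ) (Complex.sin α)) + ∫ x in a..X, G x)
      = -(E * Complex.cos α * (starRingEnd ℂ) (Complex.sin α)) + ∫ x in a..X, E * G x := by
    rw [intervalIntegral.integral_const_mul]
    ring
  rw [h1, Complex.add_re, Complex.neg_re]
  have h2 : (∫ x in Set.Ioc a X, E * G x).re = ∫ x in Set.Ioc a X, (E * G x).re :=
    (integral_re hIntC).symm
  rw [intervalIntegral.integral_of_le hax, h2]
  linarith
end

section
/- With ψ_l = θ + lφ for l ∈ ℂ, where θ, φ solve the equation −(py')' + qy = λwy with initial data θ(a)=cos α, pθ'(a)=sin α, φ(a)=sin α, pφ'(a)=−cos α, the point l lies in the Weyl disc D_X(λ) (equivalently Re[e^{iη} p(X) ψ_l'(X) conj(ψ_l(X))] ≤ 0) if and only if ∫_a^X Re[e^{iη}{p|ψ_l'|² + (q − λw)|ψ_l|²}] dx ≤ −Re[e^{iη}(sin α − l cos α)(conj(cos α) + conj(l)·conj(sin α))]. -/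
open MeasureTheory

/-- With `ψ_l = θ + lφ`, the point `l` lies in the Weyl disc `D_X(λ)`
(i.e. `Re[e^{iη} p(X) ψ_l'(X) conj(ψ_l(X))] ≤ 0`) if and only if
`∫_a^X Re[e^{iη}(p|ψ_l'|² + (q-λw)|ψ_l|²)] dx
  ≤ -Re[e^{iη}(sin α - l cos α)(conj(cos α) + conj(l) conj(sin α))]`. -/
theorem stmt9 (a X : ℝ) (haX : a ≤ X) (p q θ θ' pθd φ φ' pφd : ℝ → ℂ) (w : ℝ → ℝ)
    (α lam l : ℂ) (η : ℝ) (hw : ∀ x, 0 < w x)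
    (hθ : ∀ x ∈ Set.Icc a X, HasDerivAt θ (θ' x) x)
    (hpθ : ∀ x ∈ Set.Icc a X, HasDerivAt (fun t => p t * θ' t) (pθd x) x)
    (heqθ : ∀ x ∈ Set.Icc a X, -(pθd x) + q x * θ x = lam * (w x : ℂ) * θ x)
    (hφ : ∀ x ∈ Set.Icc a X, HasDerivAt φ (φ' x) x)
    (hpφ : ∀ x ∈ Set.Icc a X, HasDerivAt (fun t => p t * φ' t) (pφd x) x)
    (heqφ : ∀ x ∈ Set.Icc a X, -(pφd x) + q x * φ x = lam * (w x : ℂ) * φ x)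
    (hθa : θ a = Complex.cos α) (hpθa : p a * θ' a = Complex.sin α)
    (hφa : φ a = Complex.sin α) (hpφa : p a * φ' a = -Complex.cos α)
    (hint : IntervalIntegrable (fun x => Complex.exp (Complex.I * η) *
        (p x * (‖θ' x + l * φ' x‖ : ℂ) ^ 2
          + (q x - lam * (w x : ℂ)) * (‖θ x + l * φ x‖ : ℂ) ^ 2)) volume a X) :
    (Complex.exp (Complex.I * η) *
        (p X * (θ' X + l * φ' X) * (starRingEnd ℂ) (θ X + l * φ X))).re ≤ 0
      ↔ ∫ x in a..X, (Complex.exp (Complex.I * η) *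
            (p x * (‖θ' x + l * φ' x‖ : ℂ) ^ 2
              + (q x - lam * (w x : ℂ)) * (‖θ x + l * φ x‖ : ℂ) ^ 2)).re
          ≤ -(Complex.exp (Complex.I * η) * (Complex.sin α - l * Complex.cos α) *
              ((starRingEnd ℂ) (Complex.cos α)
                + (starRingEnd ℂ) l * (starRingEnd ℂ) (Complex.sin α))).re := by
  -- abbreviations
  set E : ℂ := Complex.exp (Complex.I * η) with hE
  set ψ : ℝ → ℂ := fun x => θ x + l * φ x with hψdef
  set ψ' : ℝ → ℂ := fun x => θ' x + l * φ' x with hψ'def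
  set g : ℝ → ℂ := fun x => E *
      (p x * (‖ψ' x‖ : ℂ) ^ 2 + (q x - lam * (w x : ℂ)) * (‖ψ x‖ : ℂ) ^ 2) with hgdef
  set F : ℝ → ℂ := fun x => E * (p x * ψ' x * (starRingEnd ℂ) (ψ x)) with hFdef
  have hnorm : ∀ z : ℂ, ((‖z‖ : ℂ)) ^ 2 = z * (starRingEnd ℂ) z := by
    intro z
    rw [Complex.mul_conj]
    norm_cast
    rw [Complex.normSq_eq_norm_sq]
  -- derivative of F
  have hF : ∀ x ∈ Set.Icc a X, HasDerivAt F (g x) x := by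
    intro x hx
    have hψx : HasDerivAt ψ (ψ' x) x := (hθ x hx).add ((hφ x hx).const_mul l)
    have hpψ : HasDerivAt (fun t => p t * ψ' t) (pθd x + l * pφd x) x := by
      have h := (hpθ x hx).add ((hpφ x hx).const_mul l)
      have : (fun t => p t * θ' t + l * (p t * φ' t)) = fun t => p t * ψ' t := by
        funext t; simp only [hψ'def]; ring
      rw [← this]; exact h
    have hconj : HasDerivAt (fun t => (starRingEnd ℂ) (ψ t)) ((starRingEnd ℂ) (ψ' x)) x :=
      Complex.conjCLE.hasFDerivAt.comp_hasDerivAt x hψx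
    have h := ((hpψ.mul hconj).const_mul E)
    have heq : pθd x + l * pφd x = (q x - lam * (w x : ℂ)) * ψ x := by
      have h1 := heqθ x hx
      have h2 := heqφ x hx
      simp only [hψdef]
      linear_combination -h1 - l * h2
    convert h using 1
    · rfl
    · rfl
    simp only [hgdef, hnorm, heq, map_add, map_mul]
    ring
  -- FTC
  have hFTC : ∫ x in a..X, g x = F X - F a :=
    intervalIntegral.integral_eq_sub_of_hasDerivAt
      (fun x hx => hF x (by rwa [Set.uIcc_of_le haX] at hx)) hint
  -- real parts
  have hre : ∫ x in a..X, (g x).re = (F X).re - (F a).re := by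
    have := Complex.reCLM.intervalIntegral_comp_comm hint
    simp only [Complex.reCLM_apply] at this
    rw [show (fun x => (g x).re) = fun x => Complex.reCLM (g x) from rfl] at *
    simp only [Complex.reCLM_apply] at this ⊢
    rw [this, hFTC, Complex.sub_re]
  -- value at a
  have hFa : F a = E * (Complex.sin α - l * Complex.cos α) *
      ((starRingEnd ℂ) (Complex.cos α) + (starRingEnd ℂ) l * (starRingEnd ℂ) (Complex.sin α)) := by
    simp only [hFdef, hψdef, hψ'def, hθa, hφa, map_add, map_mul]
    have : p a * (θ' a + l * φ' a) = Complex.sin α - l * Complex.cos α := by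
      have := hpθa; have := hpφa
      linear_combination hpθa + l * hpφa
    rw [this]; ring
  constructor
  · intro h
    rw [hre, hFa]
    have : (F X).re ≤ 0 := h
    linarith
  · intro h
    rw [hre, hFa] at h
    have : (F X).re ≤ 0 := by linarith
    exact this
end

section
/- The radius of the Weyl circle C_X(λ) equals ρ_X(λ) = (1/2)·{−Re[e^{iη} cos α · conj(sin α)] + ∫_a^X Re[e^{iη}(p|φ'|² + (q − λw)|φ|²)] dx}^{−1}, and hence ρ_X(λ) → 0 as X → b if and only if ∫_a^b Re[e^{iη}{p|φ'|² + (q − λw)|φ|²}] dx = ∞ (the limit-point case). -/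
open MeasureTheory Filter

/-- The radius `ρ_X(λ) = (2|Re[e^{iη} p(X)φ'(X) conj(φ(X))]|)⁻¹` of the Weyl circle equals
`(1/2)(-Re[e^{iη} cos α conj(sin α)] + ∫_a^X Re[e^{iη}(p|φ'|² + (q-λw)|φ|²)] dx)⁻¹`, and
`ρ_X(λ) → 0` as `X → b` if and only if
`∫_a^b Re[e^{iη}(p|φ'|² + (q-λw)|φ|²)] dx = ∞` (the limit-point case). -/
theorem stmt12 (a b : ℝ) (hab : a < b) (p q φ φ' pφd : ℝ → ℂ) (w : ℝ → ℝ)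
    (α K lam : ℂ) (η : ℝ)
    (hw : ∀ x ∈ Set.Ico a b, 0 < w x) (hwmeas : Measurable w)
    (hQ : ∀ x ∈ Set.Ico a b, ∀ r : ℝ, 0 < r →
      0 ≤ (Complex.exp (Complex.I * η) * ((r : ℂ) * p x + q x / (w x : ℂ) - K)).re)
    (hlam : ((lam - K) * Complex.exp (Complex.I * η)).re < 0)
    (hα : (Complex.exp (Complex.I * η) * Complex.cos α * (starRingEnd ℂ) (Complex.sin α)).re ≤ 0)
    (hφ : ∀ x ∈ Set.Ico a b, HasDerivAt φ (φ' x) x)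
    (hpφ : ∀ x ∈ Set.Ico a b, HasDerivAt (fun t => p t * φ' t) (pφd x) x)
    (heq : ∀ x ∈ Set.Ico a b, -(pφd x) + q x * φ x = lam * (w x : ℂ) * φ x)
    (hφa : φ a = Complex.sin α) (hpφa : p a * φ' a = -Complex.cos α)
    (hint : ∀ X ∈ Set.Ioo a b, IntervalIntegrable (fun x => Complex.exp (Complex.I * η) *
        (p x * (‖φ' x‖ : ℂ) ^ 2 + (q x - lam * (w x : ℂ)) * (‖φ x‖ : ℂ) ^ 2)) volume a X) :
    (∀ X ∈ Set.Ioo a b,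
      (2 * |(Complex.exp (Complex.I * η) * (p X * φ' X * (starRingEnd ℂ) (φ X))).re|)⁻¹
        = (1 / 2) * (-(Complex.exp (Complex.I * η) * Complex.cos α *
              (starRingEnd ℂ) (Complex.sin α)).re
            + ∫ x in a..X, (Complex.exp (Complex.I * η) *
                (p x * (‖φ' x‖ : ℂ) ^ 2
                  + (q x - lam * (w x : ℂ)) * (‖φ x‖ : ℂ) ^ 2)).re)⁻¹) ∧
    (Tendsto (fun X : ℝ =>
        (2 * |(Complex.exp (Complex.I * η) * (p X * φ' X * (starRingEnd ℂ) (φ X))).re|)⁻¹)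
        (nhdsWithin b (Set.Iio b)) (nhds 0)
      ↔ Tendsto (fun X : ℝ => ∫ x in a..X, (Complex.exp (Complex.I * η) *
            (p x * (‖φ' x‖ : ℂ) ^ 2 + (q x - lam * (w x : ℂ)) * (‖φ x‖ : ℂ) ^ 2)).re)
          (nhdsWithin b (Set.Iio b)) atTop) := by
  set e : ℂ := Complex.exp (Complex.I * (η : ℂ)) with he
  set g : ℝ → ℝ := fun x => (e *
      (p x * (‖φ' x‖ : ℂ) ^ 2 + (q x - lam * (w x : ℂ)) * (‖φ x‖ : ℂ) ^ 2)).re with hgdef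
  set c : ℝ := -(e * Complex.cos α * (starRingEnd ℂ) (Complex.sin α)).re with hcdef
  have hconj : ∀ z : ℂ, z * (starRingEnd ℂ) z = ((‖z‖ : ℂ)) ^ 2 := fun z => by
    rw [Complex.mul_conj, Complex.normSq_eq_norm_sq]; norm_cast
  have hd0 : 0 < (e * (K - lam)).re := by
    have h1 : e * (K - lam) = -((lam - K) * e) := by ring
    rw [h1, Complex.neg_re]; linarith
  -- coefficient nonnegativity
  have hA : ∀ x ∈ Set.Ico a b,
      0 ≤ (e * p x).re ∧ 0 ≤ (e * (q x / (w x : ℂ) - K)).re := by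
    intro x hx
    have hre : ∀ r : ℝ, (e * ((r : ℂ) * p x + q x / (w x : ℂ) - K)).re
        = r * (e * p x).re + (e * (q x / (w x : ℂ) - K)).re := by
      intro r
      have h1 : e * ((r : ℂ) * p x + q x / (w x : ℂ) - K)
          = (r : ℂ) * (e * p x) + e * (q x / (w x : ℂ) - K) := by ring
      rw [h1, Complex.add_re, Complex.re_ofReal_mul]
    have hq' : ∀ r : ℝ, 0 < r →
        0 ≤ r * (e * p x).re + (e * (q x / (w x : ℂ) - K)).re := by
      intro r hr
      have h1 := hQ x hx r hr
      rwa [hre r] at h1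
    have hBnn : 0 ≤ (e * (q x / (w x : ℂ) - K)).re := by
      by_contra hB
      push_neg at hB
      rcases le_or_gt (e * p x).re 0 with hA0 | hA0
      · have h1 := hq' 1 one_pos; linarith
      · have h1 := hq' (-(e * (q x / (w x : ℂ) - K)).re / (2 * (e * p x).re))
          (div_pos (by linarith) (by linarith))
        have hAne : (e * p x).re ≠ 0 := ne_of_gt hA0
        have haux : ∀ A B : ℝ, A ≠ 0 → -B / (2 * A) * A = -B / 2 := fun A B hA => by
          field_simp
        rw [haux _ _ hAne] at h1
        linarith
    refine ⟨?_, hBnn⟩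
    by_contra hA0
    push_neg at hA0
    have h1 := hq' (((e * (q x / (w x : ℂ) - K)).re + 1) / (-(e * p x).re))
      (div_pos (by linarith) (by linarith))
    have h2 : (((e * (q x / (w x : ℂ) - K)).re + 1) / (-(e * p x).re)) * (e * p x).re
        = -((e * (q x / (w x : ℂ) - K)).re + 1) := by
      rw [div_neg, neg_mul, div_mul_cancel₀ _ (ne_of_lt hA0)]
    rw [h2] at h1
    linarith
  -- decomposition of g
  have hdecomp : ∀ x ∈ Set.Ico a b, g x =
      (e * p x).re * ‖φ' x‖ ^ 2
      + (e * (q x / (w x : ℂ) - K)).re * (w x * ‖φ x‖ ^ 2)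
      + (e * (K - lam)).re * (w x * ‖φ x‖ ^ 2) := by
    intro x hx
    have hw0 : (w x : ℂ) ≠ 0 := by
      exact_mod_cast (hw x hx).ne'
    have hkey : e * (p x * (‖φ' x‖ : ℂ) ^ 2 + (q x - lam * (w x : ℂ)) * (‖φ x‖ : ℂ) ^ 2)
        = ((‖φ' x‖ ^ 2 : ℝ) : ℂ) * (e * p x)
          + ((w x * ‖φ x‖ ^ 2 : ℝ) : ℂ) * (e * (q x / (w x : ℂ) - K))
          + ((w x * ‖φ x‖ ^ 2 : ℝ) : ℂ) * (e * (K - lam)) := by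
      push_cast
      field_simp
      ring
    show (e * (p x * (‖φ' x‖ : ℂ) ^ 2 + (q x - lam * (w x : ℂ)) * (‖φ x‖ : ℂ) ^ 2)).re = _
    rw [hkey, Complex.add_re, Complex.add_re, Complex.re_ofReal_mul, Complex.re_ofReal_mul,
      Complex.re_ofReal_mul]
    ring
  have hgnn : ∀ x ∈ Set.Ico a b, 0 ≤ g x := by
    intro x hx
    rw [hdecomp x hx]
    have h1 := (hA x hx).1
    have h2 := (hA x hx).2
    have hwx := (hw x hx).le
    have t1 := mul_nonneg h1 (sq_nonneg ‖φ' x‖)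
    have t2 := mul_nonneg h2 (mul_nonneg hwx (sq_nonneg ‖φ x‖))
    have t3 := mul_nonneg hd0.le (mul_nonneg hwx (sq_nonneg ‖φ x‖))
    linarith
  have hglb : ∀ x ∈ Set.Ico a b,
      (e * (K - lam)).re * (w x * ‖φ x‖ ^ 2) ≤ g x := by
    intro x hx
    rw [hdecomp x hx]
    have h1 := (hA x hx).1
    have h2 := (hA x hx).2
    have hwx := (hw x hx).le
    have t1 := mul_nonneg h1 (sq_nonneg ‖φ' x‖)
    have t2 := mul_nonneg h2 (mul_nonneg hwx (sq_nonneg ‖φ x‖))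
    have t3 := mul_nonneg hd0.le (mul_nonneg hwx (sq_nonneg ‖φ x‖))
    linarith
  -- integrability of g
  have hgint : ∀ X ∈ Set.Ioo a b, IntervalIntegrable g volume a X := by
    intro X hX
    exact ⟨(hint X hX).1.re, (hint X hX).2.re⟩
  -- FTC identity
  have key : ∀ X ∈ Set.Ioo a b,
      (e * (p X * φ' X * (starRingEnd ℂ) (φ X))).re = c + ∫ x in a..X, g x := by
    intro X hX
    have haX : a ≤ X := hX.1.le
    have hsub : Set.uIcc a X ⊆ Set.Ico a b := by
      rw [Set.uIcc_of_le haX]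
      exact fun u hu => ⟨hu.1, lt_of_le_of_lt hu.2 hX.2⟩
    have hderiv : ∀ x ∈ Set.uIcc a X,
        HasDerivAt (fun t => (e * (p t * φ' t * (starRingEnd ℂ) (φ t))).re) (g x) x := by
      intro x hx
      have hx' := hsub hx
      have d1 : HasDerivAt (fun t => p t * φ' t * (starRingEnd ℂ) (φ t))
          (pφd x * (starRingEnd ℂ) (φ x) + p x * φ' x * (starRingEnd ℂ) (φ' x)) x :=
        (hpφ x hx').mul ((hφ x hx').star)
      have d2 := d1.const_mul e
      have d3 : HasDerivAt (fun t => (e * (p t * φ' t * (starRingEnd ℂ) (φ t))).re)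
          ((e * (pφd x * (starRingEnd ℂ) (φ x) + p x * φ' x * (starRingEnd ℂ) (φ' x))).re) x :=
        Complex.reCLM.hasFDerivAt.comp_hasDerivAt x d2
      have hpd : pφd x = (q x - lam * (w x : ℂ)) * φ x := by
        linear_combination -(heq x hx')
      have hval : e * (pφd x * (starRingEnd ℂ) (φ x) + p x * φ' x * (starRingEnd ℂ) (φ' x))
          = e * (p x * (‖φ' x‖ : ℂ) ^ 2 + (q x - lam * (w x : ℂ)) * (‖φ x‖ : ℂ) ^ 2) := by
        linear_combination e * (starRingEnd ℂ) (φ x) * hpd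
          + e * p x * hconj (φ' x) + e * (q x - lam * (w x : ℂ)) * hconj (φ x)
      have hgx : g x = (e * (pφd x * (starRingEnd ℂ) (φ x)
          + p x * φ' x * (starRingEnd ℂ) (φ' x))).re := by
        show (e * (p x * (‖φ' x‖ : ℂ) ^ 2 + (q x - lam * (w x : ℂ)) * (‖φ x‖ : ℂ) ^ 2)).re = _
        rw [hval]
      rw [hgx]
      exact d3
    have hftc := intervalIntegral.integral_eq_sub_of_hasDerivAt hderiv (hgint X hX)
    rw [hftc]
    show (e * (p X * φ' X * (starRingEnd ℂ) (φ X))).re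
        = c + ((e * (p X * φ' X * (starRingEnd ℂ) (φ X))).re
          - (e * (p a * φ' a * (starRingEnd ℂ) (φ a))).re)
    have hRa : (e * (p a * φ' a * (starRingEnd ℂ) (φ a))).re = c := by
      rw [hφa, hpφa]
      have h1 : e * (-Complex.cos α * (starRingEnd ℂ) (Complex.sin α))
          = -(e * Complex.cos α * (starRingEnd ℂ) (Complex.sin α)) := by ring
      rw [h1, Complex.neg_re, hcdef]
    rw [hRa]
    ring
  have hc0 : 0 ≤ c := by rw [hcdef]; linarith
  have hInn : ∀ X ∈ Set.Ioo a b, 0 ≤ ∫ x in a..X, g x := fun X hX =>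
    intervalIntegral.integral_nonneg hX.1.le
      (fun u hu => hgnn u ⟨hu.1, lt_of_le_of_lt hu.2 hX.2⟩)
  -- positivity of c + ∫
  have hFpos : ∀ X ∈ Set.Ioo a b, 0 < c + ∫ x in a..X, g x := by
    intro X hX
    by_contra hle
    push_neg at hle
    have hI := hInn X hX
    have hIeq : (∫ x in a..X, g x) = 0 := le_antisymm (by linarith) hI
    have hmeas0 : ∀ᵐ u ∂(volume.restrict (Set.Ioc a X)), g u = 0 := by
      have h0 : (∫ u in Set.Ioc a X, g u) = 0 := by
        rw [← intervalIntegral.integral_of_le hX.1.le]; exact hIeq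
      have hnn : 0 ≤ᵐ[volume.restrict (Set.Ioc a X)] g :=
        (ae_restrict_iff' measurableSet_Ioc).mpr (ae_of_all _ fun u hu =>
          hgnn u ⟨hu.1.le, lt_of_le_of_lt hu.2 hX.2⟩)
      exact (setIntegral_eq_zero_iff_of_nonneg_ae hnn (hgint X hX).1).mp h0
    have hae : volume {u : ℝ | ¬ (u ∈ Set.Ioc a X → g u = 0)} = 0 :=
      ae_iff.mp ((ae_restrict_iff' measurableSet_Ioc).mp hmeas0)
    -- φ is nonzero just to the right of a
    have hφne : ∃ ε > 0, ∀ u, a < u → u < a + ε → φ u ≠ 0 := by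
      by_cases hs : Complex.sin α = 0
      · have hcosne : Complex.cos α ≠ 0 := by
          intro h0
          have h1 := Complex.sin_sq_add_cos_sq α
          rw [hs, h0] at h1
          simp at h1
        have hφ'a : φ' a ≠ 0 := by
          intro h0
          rw [h0, mul_zero] at hpφa
          exact hcosne (by simpa using hpφa.symm)
        have hsl := hasDerivAt_iff_tendsto_slope.mp (hφ a ⟨le_refl a, hab⟩)
        have hev := hsl.eventually_ne hφ'a
        rw [eventually_nhdsWithin_iff, Metric.eventually_nhds_iff] at hev
        obtain ⟨ε, hε, hev⟩ := hev
        refine ⟨ε, hε, fun u hu1 hu2 => ?_⟩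
        have hdist : dist u a < ε := by
          rw [Real.dist_eq, abs_of_pos (by linarith)]; linarith
        have hne := hev hdist (Set.mem_compl_singleton_iff.mpr (ne_of_gt hu1))
        intro h0
        apply hne
        have hφa0 : φ a = 0 := by rw [hφa, hs]
        simp [slope, hφa0, h0]
      · have hcont := (hφ a ⟨le_refl a, hab⟩).continuousAt
        have hne : φ a ≠ 0 := by rw [hφa]; exact hs
        have hev := hcont.eventually_ne hne
        rw [Metric.eventually_nhds_iff] at hev
        obtain ⟨ε, hε, hev⟩ := hev
        exact ⟨ε, hε, fun u hu1 hu2 => hev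
          (by rw [Real.dist_eq, abs_of_pos (by linarith)]; linarith)⟩
    obtain ⟨ε, hε, hφne⟩ := hφne
    have ham : a < min (a + ε / 2) X := lt_min (by linarith) hX.1
    have hS : ¬ (∀ u ∈ Set.Ioc a (min (a + ε / 2) X), g u ≠ 0) := by
      intro hcontra
      have hsub2 : Set.Ioc a (min (a + ε / 2) X)
          ⊆ {u : ℝ | ¬ (u ∈ Set.Ioc a X → g u = 0)} := by
        intro u hu himp
        exact hcontra u hu (himp (Set.Ioc_subset_Ioc le_rfl (min_le_right _ _) hu))
      have h0 : volume (Set.Ioc a (min (a + ε / 2) X)) = 0 := measure_mono_null hsub2 hae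
      rw [Real.volume_Ioc, ENNReal.ofReal_eq_zero] at h0
      linarith
    push_neg at hS
    obtain ⟨u, hu, hgu⟩ := hS
    have hub : u < b := lt_of_le_of_lt (le_trans hu.2 (min_le_right _ _)) hX.2
    have huIco : u ∈ Set.Ico a b := ⟨hu.1.le, hub⟩
    have hune : φ u ≠ 0 := by
      refine hφne u hu.1 ?_
      have := le_trans hu.2 (min_le_left _ _)
      linarith
    have hlow := hglb u huIco
    rw [hgu] at hlow
    have hwu := hw u huIco
    have hn : 0 < ‖φ u‖ ^ 2 := pow_pos (norm_pos_iff.mpr hune) 2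
    have := mul_pos hd0 (mul_pos hwu hn)
    linarith
  -- monotonicity of the integral
  have hmono : ∀ X Y : ℝ, X ∈ Set.Ioo a b → Y ∈ Set.Ioo a b → X ≤ Y →
      (∫ x in a..X, g x) ≤ ∫ x in a..Y, g x := by
    intro X Y hX hY hXY
    have hiY := hgint Y hY
    have h1 : IntervalIntegrable g volume a X := hiY.mono_set (by
      rw [Set.uIcc_of_le hX.1.le, Set.uIcc_of_le hY.1.le]
      exact Set.Icc_subset_Icc le_rfl hXY)
    have h2 : IntervalIntegrable g volume X Y := hiY.mono_set (by
      rw [Set.uIcc_of_le hXY, Set.uIcc_of_le hY.1.le]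
      exact Set.Icc_subset_Icc hX.1.le le_rfl)
    have hadd := intervalIntegral.integral_add_adjacent_intervals h1 h2
    have h3 : 0 ≤ ∫ x in X..Y, g x :=
      intervalIntegral.integral_nonneg hXY fun u hu =>
        hgnn u ⟨le_trans hX.1.le hu.1, lt_of_le_of_lt hu.2 hY.2⟩
    linarith
  -- part 1
  have part1 : ∀ X ∈ Set.Ioo a b,
      (2 * |(e * (p X * φ' X * (starRingEnd ℂ) (φ X))).re|)⁻¹
        = (1 / 2) * (c + ∫ x in a..X, g x)⁻¹ := by
    intro X hX
    rw [key X hX, abs_of_pos (hFpos X hX), mul_inv]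
    norm_num
  refine ⟨part1, ?_⟩
  have hIoo : Set.Ioo a b ∈ nhdsWithin b (Set.Iio b) :=
    Ioo_mem_nhdsLT_of_mem ⟨hab, le_refl b⟩
  have heqv : (fun X : ℝ => (2 * |(e * (p X * φ' X * (starRingEnd ℂ) (φ X))).re|)⁻¹)
      =ᶠ[nhdsWithin b (Set.Iio b)] fun X => (1 / 2) * (c + ∫ x in a..X, g x)⁻¹ :=
    eventually_of_mem hIoo fun X hX => part1 X hX
  constructor
  · intro h
    have h2 : Tendsto (fun X : ℝ => (1 / 2) * (c + ∫ x in a..X, g x)⁻¹)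
        (nhdsWithin b (Set.Iio b)) (nhds 0) := Tendsto.congr' heqv h
    have h3 := h2.const_mul (2 : ℝ)
    rw [mul_zero] at h3
    have h3' : Tendsto (fun X : ℝ => (c + ∫ x in a..X, g x)⁻¹)
        (nhdsWithin b (Set.Iio b)) (nhds 0) := h3.congr fun X => by ring
    have hX0 : (a + b) / 2 ∈ Set.Ioo a b := ⟨by linarith, by linarith⟩
    have hF0 := hFpos _ hX0
    have hF : Tendsto (fun X : ℝ => c + ∫ x in a..X, g x)
        (nhdsWithin b (Set.Iio b)) atTop := by
      rw [tendsto_atTop]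
      intro M
      have hεpos : 0 < (max M (c + ∫ x in a..(a + b) / 2, g x))⁻¹ :=
        inv_pos.mpr (lt_max_of_lt_right hF0)
      have hev1 := h3'.eventually_lt_const hεpos
      have hev2 : ∀ᶠ X in nhdsWithin b (Set.Iio b), (a + b) / 2 ≤ X :=
        eventually_of_mem (Ioo_mem_nhdsLT_of_mem ⟨hX0.2, le_refl b⟩)
          fun X hX => hX.1.le
      filter_upwards [hev1, hev2, eventually_of_mem hIoo fun X hX => hX]
        with X h1 hle2 hXmem
      have hFX : (c + ∫ x in a..(a + b) / 2, g x) ≤ c + ∫ x in a..X, g x := by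
        have := hmono _ X hX0 hXmem hle2
        linarith
      have hpos : 0 < c + ∫ x in a..X, g x := lt_of_lt_of_le hF0 hFX
      have h5 : max M (c + ∫ x in a..(a + b) / 2, g x) < c + ∫ x in a..X, g x := by
        by_contra hcon
        push_neg at hcon
        have h6 : (max M (c + ∫ x in a..(a + b) / 2, g x))⁻¹
            ≤ (c + ∫ x in a..X, g x)⁻¹ := by
          apply inv_anti₀ hpos hcon
        linarith
      exact le_trans (le_max_left _ _) h5.le
    have := tendsto_atTop_add_const_right (nhdsWithin b (Set.Iio b)) (-c) hF
    exact this.congr fun X => by ring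
  · intro h
    have hF : Tendsto (fun X : ℝ => c + ∫ x in a..X, g x)
        (nhdsWithin b (Set.Iio b)) atTop := tendsto_atTop_add_const_left _ c h
    have h2 : Tendsto (fun X : ℝ => (c + ∫ x in a..X, g x)⁻¹)
        (nhdsWithin b (Set.Iio b)) (nhds 0) := hF.inv_tendsto_atTop
    have h3 := h2.const_mul ((1 : ℝ) / 2)
    rw [mul_zero] at h3
    exact Tendsto.congr' heqv.symm h3
end

section
/- Let ψ(·, λ) = θ(·, λ) + m(λ)φ(·, λ) and ψ(·, λ') = θ(·, λ') + m(λ')φ(·, λ') be Weyl solutions with lim_{X→b}[ψ(·,λ), ψ(·,λ')](X) = 0, where [u, v] = p(uv' − vu'). Then (λ' − λ)∫_a^b ψ(x, λ)ψ(x, λ')w(x) dx = m(λ) − m(λ'). -/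
/-!
By the differential equations, the Lagrange bracket `[ψ(·,λ), ψ(·,λ')]` has derivative
`(λ - λ') ψ(·,λ) ψ(·,λ') w`, so the weighted integral is the difference of the boundary values of
the bracket (FTC with a one-sided limit at `b`). The limit at `b` is `0`, and at `a` the common
initial conditions give `m(λ) - m(λ')` through `sin² α + cos² α = 1`.
-/

open MeasureTheory Filter Set

/-- The derivatives `y'` and `(p y')'` are carried as the explicit functions `y'` and `py'd`. -/
def IsSturmLiouvilleSolution (p q w : ℝ → ℂ) (lam : ℂ) (s : Set ℝ) (y y' py'd : ℝ → ℂ) : Prop :=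
  ∀ x ∈ s, HasDerivAt y (y' x) x ∧ HasDerivAt (fun t => p t * y' t) (py'd x) x ∧
    -(py'd x) + q x * y x = lam * w x * y x

def lagrangeBracket (p u u' v v' : ℝ → ℂ) (x : ℝ) : ℂ :=
  p x * (u x * v' x - v x * u' x)

namespace IsSturmLiouvilleSolution

variable {p q w : ℝ → ℂ} {lam : ℂ} {s : Set ℝ}

theorem add_const_mul {u u' pud v v' pvd : ℝ → ℂ}
    (hu : IsSturmLiouvilleSolution p q w lam s u u' pud)
    (hv : IsSturmLiouvilleSolution p q w lam s v v' pvd) (c : ℂ) :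
    IsSturmLiouvilleSolution p q w lam s (fun x => u x + c * v x) (fun x => u' x + c * v' x)
      (fun x => pud x + c * pvd x) := by
  intro x hx
  obtain ⟨hu, hpu, hequ⟩ := hu x hx
  obtain ⟨hv, hpv, heqv⟩ := hv x hx
  refine ⟨hu.add (hv.const_mul c), ?_, by linear_combination hequ + c * heqv⟩
  have hp : (fun t => p t * (u' t + c * v' t)) = fun t => p t * u' t + c * (p t * v' t) := by
    funext t
    ring
  exact hp ▸ hpu.add (hpv.const_mul c)

theorem hasDerivAt_lagrangeBracket {lam' : ℂ} {u u' pud v v' pvd : ℝ → ℂ}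
    (hu : IsSturmLiouvilleSolution p q w lam s u u' pud)
    (hv : IsSturmLiouvilleSolution p q w lam' s v v' pvd) {x : ℝ} (hx : x ∈ s) :
    HasDerivAt (lagrangeBracket p u u' v v') ((lam - lam') * (u x * v x * w x)) x := by
  obtain ⟨hu, hpu, hequ⟩ := hu x hx
  obtain ⟨hv, hpv, heqv⟩ := hv x hx
  have hF : lagrangeBracket p u u' v v' = fun t => u t * (p t * v' t) - v t * (p t * u' t) := by
    funext t
    simp only [lagrangeBracket]
    ring
  rw [hF]
  exact ((hu.mul hpv).sub (hv.mul hpu)).congr_deriv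
    (by linear_combination v x * hequ - u x * heqv)

end IsSturmLiouvilleSolution

open IsSturmLiouvilleSolution in
theorem sub_mul_integral_eq_lagrangeBracket_sub {p q w : ℝ → ℂ} {lam lam' : ℂ} {a b : ℝ}
    (hab : a < b) {u u' pud v v' pvd : ℝ → ℂ} {L : ℂ}
    (hu : IsSturmLiouvilleSolution p q w lam (Ico a b) u u' pud)
    (hv : IsSturmLiouvilleSolution p q w lam' (Ico a b) v v' pvd)
    (hb : Tendsto (lagrangeBracket p u u' v v') (nhdsWithin b (Iio b)) (nhds L))
    (hint : IntegrableOn (fun x => u x * v x * w x) (Ico a b)) :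
    (lam' - lam) * ∫ x in Ico a b, u x * v x * w x = lagrangeBracket p u u' v v' a - L := by
  have ha : Tendsto (lagrangeBracket p u u' v v') (nhdsWithin a (Ioi a))
      (nhds (lagrangeBracket p u u' v v' a)) :=
    (hasDerivAt_lagrangeBracket hu hv (left_mem_Ico.2 hab)).continuousAt.tendsto.mono_left
      nhdsWithin_le_nhds
  have hftc := intervalIntegral.integral_eq_sub_of_hasDerivAt_of_tendsto hab
    (fun x hx => hasDerivAt_lagrangeBracket hu hv (Ioo_subset_Ico_self hx))
    ((intervalIntegrable_iff_integrableOn_Ico_of_le hab.le).2 (hint.const_mul _)) ha hb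
  rw [intervalIntegral.integral_const_mul, intervalIntegral.integral_of_le hab.le,
    integral_Ioc_eq_integral_Ioo, ← integral_Ico_eq_integral_Ioo] at hftc
  linear_combination -hftc

theorem lagrangeBracket_add_const_mul_of_initialValues {p θ1 θ1' φ1 φ1' θ2 θ2' φ2 φ2' : ℝ → ℂ}
    {a : ℝ} {α : ℂ} (m1 m2 : ℂ)
    (hθ1a : θ1 a = Complex.cos α) (hpθ1a : p a * θ1' a = Complex.sin α)
    (hφ1a : φ1 a = Complex.sin α) (hpφ1a : p a * φ1' a = -Complex.cos α)
    (hθ2a : θ2 a = Complex.cos α) (hpθ2a : p a * θ2' a = Complex.sin α)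
    (hφ2a : φ2 a = Complex.sin α) (hpφ2a : p a * φ2' a = -Complex.cos α) :
    lagrangeBracket p (fun x => θ1 x + m1 * φ1 x) (fun x => θ1' x + m1 * φ1' x)
      (fun x => θ2 x + m2 * φ2 x) (fun x => θ2' x + m2 * φ2' x) a = m1 - m2 := by
  have hbracket : lagrangeBracket p (fun x => θ1 x + m1 * φ1 x) (fun x => θ1' x + m1 * φ1' x)
      (fun x => θ2 x + m2 * φ2 x) (fun x => θ2' x + m2 * φ2' x) a =
      (θ1 a + m1 * φ1 a) * (p a * θ2' a + m2 * (p a * φ2' a))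
        - (θ2 a + m2 * φ2 a) * (p a * θ1' a + m1 * (p a * φ1' a)) := by
    simp only [lagrangeBracket]
    ring
  rw [hbracket, hθ1a, hφ1a, hθ2a, hφ2a, hpθ1a, hpφ1a, hpθ2a, hpφ2a]
  linear_combination (m1 - m2) * Complex.sin_sq_add_cos_sq α

theorem stmt14_general (a b : ℝ) (hab : a < b) (p q : ℝ → ℂ) (w : ℝ → ℝ)
    (α lam lam' m1 m2 : ℂ)
    (θ1 θ1' pθ1d φ1 φ1' pφ1d θ2 θ2' pθ2d φ2 φ2' pφ2d : ℝ → ℂ)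
    (hθ1 : ∀ x ∈ Set.Ico a b, HasDerivAt θ1 (θ1' x) x)
    (hpθ1 : ∀ x ∈ Set.Ico a b, HasDerivAt (fun t => p t * θ1' t) (pθ1d x) x)
    (heqθ1 : ∀ x ∈ Set.Ico a b, -(pθ1d x) + q x * θ1 x = lam * (w x : ℂ) * θ1 x)
    (hφ1 : ∀ x ∈ Set.Ico a b, HasDerivAt φ1 (φ1' x) x)
    (hpφ1 : ∀ x ∈ Set.Ico a b, HasDerivAt (fun t => p t * φ1' t) (pφ1d x) x)
    (heqφ1 : ∀ x ∈ Set.Ico a b, -(pφ1d x) + q x * φ1 x = lam * (w x : ℂ) * φ1 x)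
    (hθ2 : ∀ x ∈ Set.Ico a b, HasDerivAt θ2 (θ2' x) x)
    (hpθ2 : ∀ x ∈ Set.Ico a b, HasDerivAt (fun t => p t * θ2' t) (pθ2d x) x)
    (heqθ2 : ∀ x ∈ Set.Ico a b, -(pθ2d x) + q x * θ2 x = lam' * (w x : ℂ) * θ2 x)
    (hφ2 : ∀ x ∈ Set.Ico a b, HasDerivAt φ2 (φ2' x) x)
    (hpφ2 : ∀ x ∈ Set.Ico a b, HasDerivAt (fun t => p t * φ2' t) (pφ2d x) x)
    (heqφ2 : ∀ x ∈ Set.Ico a b, -(pφ2d x) + q x * φ2 x = lam' * (w x : ℂ) * φ2 x)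
    (hθ1a : θ1 a = Complex.cos α) (hpθ1a : p a * θ1' a = Complex.sin α)
    (hφ1a : φ1 a = Complex.sin α) (hpφ1a : p a * φ1' a = -Complex.cos α)
    (hθ2a : θ2 a = Complex.cos α) (hpθ2a : p a * θ2' a = Complex.sin α)
    (hφ2a : φ2 a = Complex.sin α) (hpφ2a : p a * φ2' a = -Complex.cos α)
    (hbracket : Tendsto (fun X : ℝ => p X *
        ((θ1 X + m1 * φ1 X) * (θ2' X + m2 * φ2' X)
          - (θ2 X + m2 * φ2 X) * (θ1' X + m1 * φ1' X)))
      (nhdsWithin b (Set.Iio b)) (nhds 0))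
    (hint : IntegrableOn (fun x => (θ1 x + m1 * φ1 x) * (θ2 x + m2 * φ2 x) * (w x : ℂ))
      (Set.Ico a b)) :
    (lam' - lam) * ∫ x in Set.Ico a b, (θ1 x + m1 * φ1 x) * (θ2 x + m2 * φ2 x) * (w x : ℂ)
      = m1 - m2 := by
  have hψ1 : IsSturmLiouvilleSolution p q (fun x => w x) lam (Ico a b) _ _ _ :=
    IsSturmLiouvilleSolution.add_const_mul (fun x hx => ⟨hθ1 x hx, hpθ1 x hx, heqθ1 x hx⟩)
      (fun x hx => ⟨hφ1 x hx, hpφ1 x hx, heqφ1 x hx⟩) m1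
  have hψ2 : IsSturmLiouvilleSolution p q (fun x => w x) lam' (Ico a b) _ _ _ :=
    IsSturmLiouvilleSolution.add_const_mul (fun x hx => ⟨hθ2 x hx, hpθ2 x hx, heqθ2 x hx⟩)
      (fun x hx => ⟨hφ2 x hx, hpφ2 x hx, heqφ2 x hx⟩) m2
  rw [sub_mul_integral_eq_lagrangeBracket_sub hab hψ1 hψ2 hbracket hint,
    lagrangeBracket_add_const_mul_of_initialValues m1 m2 hθ1a hpθ1a hφ1a hpφ1a hθ2a hpθ2a hφ2a
      hpφ2a, sub_zero]

/-- For Weyl solutions `ψ(·,λ) = θ(·,λ) + m(λ)φ(·,λ)` and `ψ(·,λ') = θ(·,λ') + m(λ')φ(·,λ')`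
with `lim_{X→b} [ψ(·,λ), ψ(·,λ')](X) = 0` (where `[u,v] = p(uv' - vu')`), one has
`(λ' - λ) ∫_a^b ψ(x,λ)ψ(x,λ') w dx = m(λ) - m(λ')`. -/
theorem stmt14 (a b : ℝ) (hab : a < b) (p q : ℝ → ℂ) (w : ℝ → ℝ)
    (α lam lam' m1 m2 : ℂ)
    (θ1 θ1' pθ1d φ1 φ1' pφ1d θ2 θ2' pθ2d φ2 φ2' pφ2d : ℝ → ℂ)
    (hw : ∀ x ∈ Set.Ico a b, 0 < w x)
    (hθ1 : ∀ x ∈ Set.Ico a b, HasDerivAt θ1 (θ1' x) x)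
    (hpθ1 : ∀ x ∈ Set.Ico a b, HasDerivAt (fun t => p t * θ1' t) (pθ1d x) x)
    (heqθ1 : ∀ x ∈ Set.Ico a b, -(pθ1d x) + q x * θ1 x = lam * (w x : ℂ) * θ1 x)
    (hφ1 : ∀ x ∈ Set.Ico a b, HasDerivAt φ1 (φ1' x) x)
    (hpφ1 : ∀ x ∈ Set.Ico a b, HasDerivAt (fun t => p t * φ1' t) (pφ1d x) x)
    (heqφ1 : ∀ x ∈ Set.Ico a b, -(pφ1d x) + q x * φ1 x = lam * (w x : ℂ) * φ1 x)
    (hθ2 : ∀ x ∈ Set.Ico a b, HasDerivAt θ2 (θ2' x) x)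
    (hpθ2 : ∀ x ∈ Set.Ico a b, HasDerivAt (fun t => p t * θ2' t) (pθ2d x) x)
    (heqθ2 : ∀ x ∈ Set.Ico a b, -(pθ2d x) + q x * θ2 x = lam' * (w x : ℂ) * θ2 x)
    (hφ2 : ∀ x ∈ Set.Ico a b, HasDerivAt φ2 (φ2' x) x)
    (hpφ2 : ∀ x ∈ Set.Ico a b, HasDerivAt (fun t => p t * φ2' t) (pφ2d x) x)
    (heqφ2 : ∀ x ∈ Set.Ico a b, -(pφ2d x) + q x * φ2 x = lam' * (w x : ℂ) * φ2 x)
    (hθ1a : θ1 a = Complex.cos α) (hpθ1a : p a * θ1' a = Complex.sin α)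
    (hφ1a : φ1 a = Complex.sin α) (hpφ1a : p a * φ1' a = -Complex.cos α)
    (hθ2a : θ2 a = Complex.cos α) (hpθ2a : p a * θ2' a = Complex.sin α)
    (hφ2a : φ2 a = Complex.sin α) (hpφ2a : p a * φ2' a = -Complex.cos α)
    (hbracket : Tendsto (fun X : ℝ => p X *
        ((θ1 X + m1 * φ1 X) * (θ2' X + m2 * φ2' X)
          - (θ2 X + m2 * φ2 X) * (θ1' X + m1 * φ1' X)))
      (nhdsWithin b (Set.Iio b)) (nhds 0))
    (hint : IntegrableOn (fun x => (θ1 x + m1 * φ1 x) * (θ2 x + m2 * φ2 x) * (w x : ℂ))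
      (Set.Ico a b)) :
    (lam' - lam) * ∫ x in Set.Ico a b, (θ1 x + m1 * φ1 x) * (θ2 x + m2 * φ2 x) * (w x : ℂ)
      = m1 - m2 :=
  stmt14_general a b hab p q w α lam lam' m1 m2 θ1 θ1' pθ1d φ1 φ1' pφ1d θ2 θ2' pθ2d φ2 φ2' pφ2d hθ1
    hpθ1 heqθ1 hφ1 hpφ1 heqφ1 hθ2 hpθ2 heqθ2 hφ2 hpφ2 heqφ2 hθ1a hpθ1a hφ1a hpφ1a hθ2a hpθ2a hφ2a
    hpφ2a hbracket hint
end
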